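/- arXiv:2102.11210 — 6 statements merged into one kernel-verified Lean document; each statement's English description precedes it below -/
import Mathlib

section
/- Let A : ℝ → Matrix (Fin n) (Fin n) ℝ be a differentiable matrix-valued function such that A(x) is symmetric for every x. Suppose λ : ℝ → ℝ and v : ℝ → EuclideanSpace ℝ (Fin n) are differentiable functions such that for every x, A(x) · v(x) = λ(x) • v(x) and ‖v(x)‖ = 1 (a differentiable unit eigenpair). Then for every x, the derivative of λ satisfies λ'(x) = v(x)ᵀ · A'(x) · v(x), where A'(x) is the entrywise derivative of A at x. -/
open Matrix

/-!
Writing `u` for the eigenvector, `λ = u ⬝ᵥ A u` because `‖u‖ = 1`. By the product rule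
`λ' = u' ⬝ᵥ A u + u ⬝ᵥ A' u + u ⬝ᵥ A u'`, and by symmetry of `A` the two outer terms are
both `λ (u ⬝ᵥ u')`, which vanishes since `u ⬝ᵥ u` is constant.
-/

section Calculus

variable {m k : Type*} [Fintype m] {x : ℝ}

theorem HasDerivAt.dotProduct {u w : ℝ → m → ℝ} {u' w' : m → ℝ}
    (hu : HasDerivAt u u' x) (hw : HasDerivAt w w' x) :
    HasDerivAt (fun y => u y ⬝ᵥ w y) (u' ⬝ᵥ w x + u x ⬝ᵥ w') x := by
  have hsum := HasDerivAt.fun_sum (u := Finset.univ) fun i _ =>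
    (hasDerivAt_pi.1 hu i).mul (hasDerivAt_pi.1 hw i)
  rw [Finset.sum_add_distrib] at hsum
  exact hsum

theorem HasDerivAt.mulVec {A : ℝ → Matrix k m ℝ} {A' : Matrix k m ℝ} {u : ℝ → m → ℝ}
    {u' : m → ℝ} (hA : ∀ i j, HasDerivAt (fun y => A y i j) (A' i j) x)
    (hu : HasDerivAt u u' x) :
    HasDerivAt (fun y => A y *ᵥ u y) (A' *ᵥ u x + A x *ᵥ u') x :=
  hasDerivAt_pi.2 fun i => by
    simpa only [Pi.add_apply, Matrix.mulVec] using
      HasDerivAt.dotProduct (hasDerivAt_pi.2 (hA i)) hu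

end Calculus

section Eigen

variable {m : Type*} [Fintype m]

theorem eq_dotProduct_mulVec_of_mulVec_eq_smul {M : Matrix m m ℝ} {u : m → ℝ} {μ : ℝ}
    (heig : M *ᵥ u = μ • u) (hunit : u ⬝ᵥ u = 1) : μ = u ⬝ᵥ (M *ᵥ u) := by
  rw [heig, dotProduct_smul, hunit, smul_eq_mul, mul_one]

theorem Matrix.IsSymm.dotProduct_mulVec_of_mulVec_eq_smul {M : Matrix m m ℝ} (hM : M.IsSymm)
    {u : m → ℝ} {μ : ℝ} (heig : M *ᵥ u = μ • u) (w : m → ℝ) :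
    u ⬝ᵥ (M *ᵥ w) = μ * (u ⬝ᵥ w) := by
  rw [dotProduct_mulVec, ← mulVec_transpose, hM.eq, heig, smul_dotProduct, smul_eq_mul]

theorem HasDerivAt.eigenvalue_of_isSymm {A : ℝ → Matrix m m ℝ} {A' : Matrix m m ℝ}
    {u : ℝ → m → ℝ} {u' : m → ℝ} {lam : ℝ → ℝ} {x : ℝ}
    (hA : ∀ i j, HasDerivAt (fun y => A y i j) (A' i j) x) (hsymm : (A x).IsSymm)
    (hu : HasDerivAt u u' x) (heig : ∀ y, A y *ᵥ u y = lam y • u y)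
    (hunit : ∀ y, u y ⬝ᵥ u y = 1) :
    HasDerivAt lam (u x ⬝ᵥ (A' *ᵥ u x)) x := by
  have hlam : lam = fun y => u y ⬝ᵥ (A y *ᵥ u y) :=
    funext fun y => eq_dotProduct_mulVec_of_mulVec_eq_smul (heig y) (hunit y)
  have horth : u x ⬝ᵥ u' = 0 := by
    have h := hu.dotProduct hu
    simp only [hunit] at h
    rw [dotProduct_comm u'] at h
    linarith [h.unique (hasDerivAt_const x 1)]
  have hderiv := hu.dotProduct (HasDerivAt.mulVec hA hu)
  rw [← hlam] at hderiv
  convert hderiv using 1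
  rw [dotProduct_add, hsymm.dotProduct_mulVec_of_mulVec_eq_smul (heig x), heig x,
    dotProduct_smul, dotProduct_comm u', horth, smul_zero, mul_zero, zero_add, add_zero]

end Eigen

theorem stmt_0_general {n : ℕ} (A A' : ℝ → Matrix (Fin n) (Fin n) ℝ)
    (hA' : ∀ x i j, HasDerivAt (fun y => A y i j) (A' x i j) x)
    (hsymm : ∀ x, (A x).IsSymm)
    (lam : ℝ → ℝ) (v : ℝ → EuclideanSpace ℝ (Fin n))
    (hv : Differentiable ℝ v)
    (heig : ∀ x i, ∑ j, A x i j * v x j = lam x * v x i)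
    (hunit : ∀ x, ‖v x‖ = 1) :
    ∀ x, deriv lam x = ∑ i, ∑ j, v x i * A' x i j * v x j := by
  intro x
  have hu : HasDerivAt (fun y => WithLp.ofLp (v y)) _ x :=
    (PiLp.continuousLinearEquiv 2 ℝ fun _ : Fin n => ℝ).hasFDerivAt.comp_hasDerivAt x
      (hv x).hasDerivAt
  have hunit' : ∀ y, WithLp.ofLp (v y) ⬝ᵥ WithLp.ofLp (v y) = 1 := fun y => by
    have h := real_inner_self_eq_norm_sq (v y)
    rw [EuclideanSpace.inner_eq_star_dotProduct, hunit y] at h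
    simpa using h
  have heig' : ∀ y, A y *ᵥ WithLp.ofLp (v y) = lam y • WithLp.ofLp (v y) := fun y =>
    funext fun i => by simpa [mulVec, dotProduct] using heig y i
  rw [(HasDerivAt.eigenvalue_of_isSymm (hA' x) (hsymm x) hu heig' hunit').deriv]
  simp only [dotProduct, mulVec, Finset.mul_sum, mul_assoc]

/-- Derivative of a distinct eigenvalue of a differentiable family of symmetric
matrices: `λ'(x) = v(x)ᵀ A'(x) v(x)` for a differentiable unit eigenpair. -/
theorem stmt_0 {n : ℕ} (A A' : ℝ → Matrix (Fin n) (Fin n) ℝ)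
    (hA' : ∀ x i j, HasDerivAt (fun y => A y i j) (A' x i j) x)
    (hsymm : ∀ x, (A x).IsSymm)
    (lam : ℝ → ℝ) (v : ℝ → EuclideanSpace ℝ (Fin n))
    (hlam : Differentiable ℝ lam) (hv : Differentiable ℝ v)
    (heig : ∀ x i, ∑ j, A x i j * v x j = lam x * v x i)
    (hunit : ∀ x, ‖v x‖ = 1) :
    ∀ x, deriv lam x = ∑ i, ∑ j, v x i * A' x i j * v x j :=
  stmt_0_general A A' hA' hsymm lam v hv heig hunit
end

section
/- Let h : EuclideanSpace ℝ (Fin n) → ℝ be twice continuously differentiable and bounded from below, and suppose there is a constant M > 0 such that the operator norm of the second Fréchet derivative of h is at most M at every point. Let (α_k) be positive step sizes, let K₀ be a natural number with α_k ≤ 1/M for all k ≥ K₀, and define gradient-descent iterates by w_{k+1} = w_k − α_k • ∇h(w_k). Then the sequence h(w_k) converges, the series ∑_k α_k ‖∇h(w_k)‖² converges, and if moreover ∑_k α_k = ∞, then liminf_{k→∞} ‖∇h(w_k)‖ = 0. -/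
/-!
A bound `M` on the second derivative makes `∇h` `M`-Lipschitz, and then the descent lemma
`h y ≤ h x + ⟪∇h x, y - x⟫ + M/2 ‖y - x‖²` shows that once `α_k ≤ 1/M` every step decreases `h`
by at least `α_k/2 ‖∇h(w_k)‖²`. Since `h` is bounded below, the values `h(w_k)` are eventually
decreasing and bounded, hence convergent, and the decreases telescope to a convergent series. If
`‖∇h(w_k)‖ ≥ ε` from some point on, this series dominates `ε² ∑ α_k`, which is impossible when
`∑ α_k = ∞`.
-/

open Filter Set
open scoped Topology NNReal

section Descent

variable {E : Type*} [NormedAddCommGroup E] [InnerProductSpace ℝ E] [CompleteSpace E]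
  {f : E → ℝ}

theorem lipschitzWith_gradient_of_norm_iteratedFDeriv_two_le (hf : ContDiff ℝ 2 f) {C : ℝ≥0}
    (hC : ∀ x, ‖iteratedFDeriv ℝ 2 f x‖ ≤ C) : LipschitzWith C (gradient f) := by
  have hf' : Differentiable ℝ (fderiv ℝ f) :=
    (hf.fderiv_right (m := 1) le_rfl).differentiable one_ne_zero
  have hfderiv : LipschitzWith C (fderiv ℝ f) := by
    refine lipschitzWith_of_nnnorm_fderiv_le hf' fun x => ?_
    rw [← NNReal.coe_le_coe, coe_nnnorm, ← norm_iteratedFDeriv_one, norm_iteratedFDeriv_fderiv]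
    exact hC x
  have := (InnerProductSpace.toDual ℝ E).symm.lipschitz.comp hfderiv
  rwa [one_mul] at this

theorem le_add_inner_gradient_add_of_lipschitzWith_gradient (hf : Differentiable ℝ f) {L : ℝ≥0}
    (hL : LipschitzWith L (gradient f)) (x y : E) :
    f y ≤ f x + inner ℝ (gradient f x) (y - x) + L / 2 * ‖y - x‖ ^ 2 := by
  set v := y - x
  set ψ : ℝ → ℝ := fun t => f (x + t • v) - t * inner ℝ (gradient f x) v - L / 2 * t ^ 2 * ‖v‖ ^ 2
  have hψ : ∀ t, HasDerivAt ψ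
      (inner ℝ (gradient f (x + t • v) - gradient f x) v - L * t * ‖v‖ ^ 2) t := by
    intro t
    have hline : HasDerivAt (fun s : ℝ => x + s • v) v t := by
      simpa using ((hasDerivAt_id t).smul_const v).const_add x
    have := (((hf _).hasGradientAt.hasFDerivAt.comp_hasDerivAt t hline).sub
      ((hasDerivAt_id t).mul_const (inner ℝ (gradient f x) v))).sub
      (((hasDerivAt_pow 2 t).const_mul (L / 2 : ℝ)).mul_const (‖v‖ ^ 2))
    exact this.congr_deriv <| by
      simp only [InnerProductSpace.toDual_apply_apply, inner_sub_left]; ring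
  have hanti : AntitoneOn ψ (Ici 0) := by
    refine antitoneOn_of_hasDerivWithinAt_nonpos (convex_Ici 0)
      (fun t _ => (hψ t).continuousAt.continuousWithinAt) (fun t _ => (hψ t).hasDerivWithinAt)
      fun t ht => ?_
    rw [interior_Ici] at ht
    calc inner ℝ (gradient f (x + t • v) - gradient f x) v - L * t * ‖v‖ ^ 2
        ≤ ‖gradient f (x + t • v) - gradient f x‖ * ‖v‖ - L * t * ‖v‖ ^ 2 := by
          gcongr; exact real_inner_le_norm _ _
      _ ≤ L * ‖t • v‖ * ‖v‖ - L * t * ‖v‖ ^ 2 := by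
          gcongr; simpa [dist_eq_norm] using hL.dist_le_mul (x + t • v) x
      _ = 0 := by rw [norm_smul, Real.norm_of_nonneg (le_of_lt ht)]; ring
  have := hanti self_mem_Ici (mem_Ici.mpr zero_le_one) zero_le_one
  simp only [ψ, one_smul, zero_smul, add_zero, v, add_sub_cancel] at this
  linarith

theorem apply_sub_smul_gradient_add_le (hf : Differentiable ℝ f) {L : ℝ≥0}
    (hL : LipschitzWith L (gradient f)) (x : E) {a : ℝ} (ha : 0 ≤ a) (haL : L * a ≤ 1) :
    f (x - a • gradient f x) + a / 2 * ‖gradient f x‖ ^ 2 ≤ f x := by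
  have := le_add_inner_gradient_add_of_lipschitzWith_gradient hf hL x (x - a • gradient f x)
  rw [sub_sub_cancel_left, inner_neg_right, norm_neg, inner_smul_right, real_inner_self_eq_norm_sq,
    norm_smul, Real.norm_of_nonneg ha] at this
  nlinarith [sq_nonneg ‖gradient f x‖, mul_nonneg ha (sq_nonneg ‖gradient f x‖)]

end Descent

theorem exists_tendsto_and_summable_of_add_le {u b : ℕ → ℝ} (hb : ∀ k, 0 ≤ b k)
    (hu : BddBelow (range u)) (hstep : ∀ k, u (k + 1) + b k ≤ u k) :
    (∃ l, Tendsto u atTop (𝓝 l)) ∧ Summable b := by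
  have hanti : Antitone u := antitone_nat_of_succ_le fun k => by linarith [hstep k, hb k]
  obtain ⟨c, hc⟩ := hu
  refine ⟨⟨_, tendsto_atTop_ciInf hanti ⟨c, hc⟩⟩,
    summable_of_sum_range_le (c := u 0 - c) hb fun N => ?_⟩
  have htele : ∀ N, ∑ k ∈ Finset.range N, b k ≤ u 0 - u N := by
    intro N
    induction N with
    | zero => simp
    | succ N ih => rw [Finset.sum_range_succ]; linarith [hstep N]
  linarith [htele N, hc (mem_range_self N)]

theorem frequently_norm_lt_of_summable_mul_sq {E : Type*} [SeminormedAddCommGroup E]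
    {α : ℕ → ℝ} {g : ℕ → E} (hα : ∀ k, 0 ≤ α k) (hdiv : ¬Summable α)
    (hs : Summable fun k => α k * ‖g k‖ ^ 2) {ε : ℝ} (hε : 0 < ε) :
    ∃ᶠ k in atTop, ‖g k‖ < ε := by
  by_contra! hge
  refine hdiv ((hs.div_const (ε ^ 2)).of_norm_bounded_eventually_nat ?_)
  filter_upwards [hge] with k hk
  rw [Real.norm_of_nonneg (hα k), le_div_iff₀ (by positivity)]
  exact mul_le_mul_of_nonneg_left (by gcongr) (hα k)

theorem liminf_eq_zero_of_frequently_lt {g : ℕ → ℝ} (hg : ∀ k, 0 ≤ g k)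
    (hfreq : ∀ ε > 0, ∃ᶠ k in atTop, g k < ε) : liminf g atTop = 0 := by
  have hbdd : IsBoundedUnder (· ≥ ·) atTop g := isBoundedUnder_of ⟨0, hg⟩
  refine le_antisymm (le_of_forall_pos_le_add fun ε hε => ?_) ?_
  · rw [zero_add]
    exact liminf_le_of_frequently_le ((hfreq ε hε).mono fun k hk => hk.le) hbdd
  · refine le_liminf_of_le ⟨1, fun a ha => ?_⟩ (Eventually.of_forall hg)
    obtain ⟨k, hak, hk⟩ := (eventually_map.mp ha |>.and_frequently (hfreq 1 one_pos)).exists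
    exact hak.trans hk.le

/-- Convergence of gradient descent on a twice continuously differentiable function
bounded below with second derivative bounded in operator norm by `M`, using step sizes
eventually bounded by `1/M`: the function values converge, the series
`∑ α_k ‖∇h(w_k)‖²` converges, and if `∑ α_k = ∞` then `liminf ‖∇h(w_k)‖ = 0`. -/
theorem stmt_2 {n : ℕ} (h : EuclideanSpace ℝ (Fin n) → ℝ)
    (hh : ContDiff ℝ 2 h) (hbdd : BddBelow (Set.range h))
    (M : ℝ) (hM : 0 < M) (hM2 : ∀ x, ‖iteratedFDeriv ℝ 2 h x‖ ≤ M)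
    (α : ℕ → ℝ) (hα : ∀ k, 0 < α k)
    (K₀ : ℕ) (hαM : ∀ k ≥ K₀, α k ≤ 1 / M)
    (w : ℕ → EuclideanSpace ℝ (Fin n))
    (hupd : ∀ k, w (k + 1) = w k - α k • gradient h (w k)) :
    (∃ l, Tendsto (fun k => h (w k)) atTop (nhds l)) ∧
    Summable (fun k => α k * ‖gradient h (w k)‖ ^ 2) ∧
    (Tendsto (fun N => ∑ k ∈ Finset.range N, α k) atTop atTop →
      liminf (fun k => ‖gradient h (w k)‖) atTop = 0) := by
  have hM' : (M.toNNReal : ℝ) = M := Real.coe_toNNReal M hM.le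
  have hL : LipschitzWith M.toNNReal (gradient h) :=
    lipschitzWith_gradient_of_norm_iteratedFDeriv_two_le hh fun x => (hM2 x).trans_eq hM'.symm
  have hdecr : ∀ k, h (w (k + 1 + K₀)) + α (k + K₀) / 2 * ‖gradient h (w (k + K₀))‖ ^ 2 ≤
      h (w (k + K₀)) := fun k => by
    rw [add_right_comm, hupd]
    refine apply_sub_smul_gradient_add_le (hh.differentiable two_ne_zero) hL _ (hα _).le ?_
    rw [hM', ← le_div_iff₀' hM]
    exact hαM _ (Nat.le_add_left _ _)
  obtain ⟨⟨l, hl⟩, hsum⟩ := exists_tendsto_and_summable_of_add_le (u := fun k => h (w (k + K₀)))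
    (fun k => mul_nonneg (half_pos (hα (k + K₀))).le (sq_nonneg _))
    (hbdd.mono (range_comp_subset_range (fun k => w (k + K₀)) h)) hdecr
  have hsum' : Summable fun k => α k * ‖gradient h (w k)‖ ^ 2 :=
    (summable_nat_add_iff K₀).mp ((hsum.mul_left 2).congr fun k => by ring)
  refine ⟨⟨l, (tendsto_add_atTop_iff_nat K₀).mp hl⟩, hsum', fun hdiv => ?_⟩
  have hα' : ¬Summable α :=
    (not_summable_iff_tendsto_nat_atTop_of_nonneg fun k => (hα k).le).mpr hdiv
  exact liminf_eq_zero_of_frequently_lt (fun k => norm_nonneg _) fun ε hε =>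
    frequently_norm_lt_of_summable_mul_sq (fun k => (hα k).le) hα' hsum' hε
end

section
/- Let (Ω, 𝓕, P) be a probability space with filtration (𝓕_k) and let f : EuclideanSpace ℝ (Fin n) → ℝ be three times continuously differentiable with ‖D³f(w)‖ ≤ L for all w (the multilinear operator norm of the third Fréchet derivative is uniformly bounded by L). Let (w_k) be 𝓕_k-measurable EuclideanSpace ℝ (Fin n)-valued random variables, let v̄_k be unit vectors (‖v̄_k‖ = 1), and let v_k be random unit-approximation vectors with ‖v_k − v̄_k‖ ≤ ε almost surely. For a unit vector v, let q_k(v) denote the unique vector with ⟪q_k(v), u⟫ = D³f(w_k)(u, v, v) for all u. Fix μ_k ∈ [0, μ] and set p̄_k = ∇f(w_k) + μ_k • q_k(v_k), and let p_k be a random update term with E[p_k | 𝓕_k] = p̄_k and E[‖p_k − p̄_k‖^j | 𝓕_k] ≤ σ_j almost surely for j = 2, 3, 4. Assume there exist constants A_j⁽¹⁾, B_j⁽¹⁾, A_j⁽²⁾, B_j⁽²⁾ such that for j = 2, 3, 4, E[‖∇f(w_k)‖^j | 𝓕_k] ≤ A_j⁽¹⁾ + B_j⁽¹⁾‖w_k‖^j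 and E[‖q_k(v̄_k)‖^j | 𝓕_k] ≤ A_j⁽²⁾ + B_j⁽²⁾‖w_k‖^j almost surely. Then there exist positive constants A_j, B_j (depending only on L, μ, ε, σ_j and the assumed constants) such that E[‖p_k‖^j | 𝓕_k] ≤ A_j + B_j ‖w_k‖^j almost surely for j = 2, 3, 4. -/
/-!
Because `⟪q(v), q(v)⟫ = D³f(w)(q(v), v, v)`, one has `‖q(v)‖ ≤ L ‖v‖²`, and `‖v_k‖ ≤ 1 + ε`;
so the curvature term `μ_k • q_k(v_k)` is bounded by the constant `C = μ L (1 + ε)²`. Hence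
`‖p_k‖ ≤ ‖p_k - p̄_k‖ + ‖∇f(w_k)‖ + C`, and after taking `j`-th powers and conditional
expectations the `𝓕_k`-measurable gradient term passes through the conditional expectation,
where the assumed moment bound applies.
-/

open MeasureTheory Filter
open scoped RealInnerProductSpace

theorem add_add_pow_le_three_pow_mul {α : Type*} [CommSemiring α] [LinearOrder α]
    [IsStrictOrderedRing α] [ExistsAddOfLE α] {a b c : α} (ha : 0 ≤ a) (hb : 0 ≤ b) (hc : 0 ≤ c) :
    ∀ j : ℕ, (a + b + c) ^ j ≤ 3 ^ j * (a ^ j + b ^ j + c ^ j)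
  | 0 => by norm_num
  | n + 1 => by
    have h : (a + b + c) ^ (n + 1) ≤ 3 ^ n * (a ^ (n + 1) + b ^ (n + 1) + c ^ (n + 1)) := by
      simpa [Fin.sum_univ_three] using pow_sum_le_card_mul_sum_pow (s := Finset.univ)
        (f := ![a, b, c]) (by simp [Fin.forall_fin_succ, ha, hb, hc]) n
    exact h.trans (by gcongr <;> norm_num)

theorem pow_le_three_pow_mul_of_le_add {x a b c : ℝ} (hx : 0 ≤ x) (ha : 0 ≤ a) (hb : 0 ≤ b)
    (hc : 0 ≤ c) (h : x ≤ a + b + c) (j : ℕ) : x ^ j ≤ 3 ^ j * (a ^ j + b ^ j + c ^ j) :=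
  (pow_le_pow_left₀ hx h j).trans (add_add_pow_le_three_pow_mul ha hb hc j)

theorem norm_le_opNorm_mul_sq_of_inner_eq {E : Type*} [NormedAddCommGroup E]
    [InnerProductSpace ℝ E] (T : ContinuousMultilinearMap ℝ (fun _ : Fin 3 => E) ℝ) {Q x : E}
    (hQ : ∀ u, ⟪Q, u⟫ = T ![u, x, x]) : ‖Q‖ ≤ ‖T‖ * ‖x‖ ^ 2 := by
  have h : ‖Q‖ * ‖Q‖ ≤ ‖T‖ * ‖x‖ ^ 2 * ‖Q‖ :=
    calc ‖Q‖ * ‖Q‖ = T ![Q, x, x] := by rw [← hQ, real_inner_self_eq_norm_mul_norm]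
      _ ≤ ‖T ![Q, x, x]‖ := Real.le_norm_self _
      _ ≤ ‖T‖ * ∏ i, ‖![Q, x, x] i‖ := T.le_opNorm _
      _ = ‖T‖ * ‖x‖ ^ 2 * ‖Q‖ := by simp [Fin.prod_univ_three]; ring
  rcases (norm_nonneg Q).eq_or_lt with hQ0 | hQ0
  · rw [← hQ0]; positivity
  · exact le_of_mul_le_mul_right h hQ0

theorem norm_smul_le_of_inner_eq {E : Type*} [NormedAddCommGroup E] [InnerProductSpace ℝ E]
    (T : ContinuousMultilinearMap ℝ (fun _ : Fin 3 => E) ℝ) {Q x y : E} {s μ L ε : ℝ}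
    (hQ : ∀ u, ⟪Q, u⟫ = T ![u, x, x]) (hT : ‖T‖ ≤ L) (hy : ‖y‖ = 1) (hxy : ‖x - y‖ ≤ ε)
    (hs : s ∈ Set.Icc 0 μ) : ‖s • Q‖ ≤ μ * (L * (1 + ε) ^ 2) := by
  have hx : ‖x‖ ≤ 1 + ε := by linarith [norm_le_insert' x y]
  have hQ_le : ‖Q‖ ≤ L * (1 + ε) ^ 2 :=
    (norm_le_opNorm_mul_sq_of_inner_eq T hQ).trans
      (mul_le_mul hT (by gcongr) (by positivity) ((norm_nonneg T).trans hT))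
  rw [norm_smul, Real.norm_of_nonneg hs.1]
  exact mul_le_mul hs.2 hQ_le (norm_nonneg _) (hs.1.trans hs.2)

theorem measurable_gradient {F : Type*} [NormedAddCommGroup F] [InnerProductSpace ℝ F]
    [CompleteSpace F] [MeasurableSpace F] [BorelSpace F] (f : F → ℝ) :
    Measurable (gradient f) :=
  (InnerProductSpace.toDual ℝ F).symm.continuous.measurable.comp (measurable_fderiv ℝ f)

theorem norm_pow_le_three_pow_of_eq_add {E : Type*} [SeminormedAddCommGroup E]
    {p pbar g r : E} {C : ℝ} (hpbar : pbar = g + r) (hr : ‖r‖ ≤ C) (j : ℕ) :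
    ‖p‖ ^ j ≤ 3 ^ j * (‖p - pbar‖ ^ j + ‖g‖ ^ j + C ^ j) := by
  refine pow_le_three_pow_mul_of_le_add (norm_nonneg _) (norm_nonneg _) (norm_nonneg _)
    ((norm_nonneg _).trans hr) ?_ j
  calc ‖p‖ = ‖(p - pbar) + g + r‖ := by rw [hpbar]; abel_nf
    _ ≤ ‖p - pbar‖ + ‖g‖ + C := (norm_add_le _ _).trans (add_le_add (norm_add_le _ _) hr)

theorem norm_pow_le_three_pow_of_eq_add' {E : Type*} [SeminormedAddCommGroup E]
    {p pbar g r : E} {C : ℝ} (hpbar : pbar = g + r) (hr : ‖r‖ ≤ C) (j : ℕ) :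
    ‖g‖ ^ j ≤ 3 ^ j * (‖p - pbar‖ ^ j + ‖p‖ ^ j + C ^ j) := by
  refine pow_le_three_pow_mul_of_le_add (norm_nonneg _) (norm_nonneg _) (norm_nonneg _)
    ((norm_nonneg _).trans hr) ?_ j
  calc ‖g‖ = ‖-(p - pbar) + p - r‖ := by rw [hpbar]; abel_nf
    _ ≤ ‖p - pbar‖ + ‖p‖ + C := by
      refine (norm_sub_le _ _).trans (add_le_add ((norm_add_le _ _).trans ?_) hr)
      rw [norm_neg]

theorem condExp_norm_pow_le_of_eq_add {Ω E : Type*} {m m0 : MeasurableSpace Ω} {P : Measure Ω}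
    [IsFiniteMeasure P] [NormedAddCommGroup E] (hm : m ≤ m0) {p pbar g r : Ω → E}
    {C σ : ℝ} {b : Ω → ℝ} (j : ℕ) (hpbar : ∀ ω, pbar ω = g ω + r ω)
    (hr : ∀ᵐ ω ∂P, ‖r ω‖ ≤ C) (hg : StronglyMeasurable[m] g)
    (hcentint : Integrable (fun ω => ‖p ω - pbar ω‖ ^ j) P)
    (hcent : P[fun ω => ‖p ω - pbar ω‖ ^ j | m] ≤ᵐ[P] fun _ => σ)
    (hgmom : P[fun ω => ‖g ω‖ ^ j | m] ≤ᵐ[P] b) :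
    P[fun ω => ‖p ω‖ ^ j | m] ≤ᵐ[P] fun ω => 3 ^ j * (σ + b ω + C ^ j) := by
  set X : Ω → ℝ := fun ω => ‖p ω - pbar ω‖ ^ j
  set Y : Ω → ℝ := fun ω => ‖g ω‖ ^ j
  have hYm : StronglyMeasurable[m] Y := hg.norm.pow j
  by_cases hpint : Integrable (fun ω => ‖p ω‖ ^ j) P
  swap
  · have hX0 : 0 ≤ᵐ[P] P[X | m] := condExp_nonneg (ae_of_all _ fun ω => by positivity)
    have hY0 : 0 ≤ᵐ[P] P[Y | m] := condExp_nonneg (ae_of_all _ fun ω => by positivity)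
    rw [condExp_of_not_integrable hpint]
    filter_upwards [hX0, hY0, hcent, hgmom, hr] with ω hX0 hY0 hcent hgmom hr
    have hC : 0 ≤ C := (norm_nonneg _).trans hr
    have hσb : 0 ≤ σ + b ω := add_nonneg (hX0.trans hcent) (hY0.trans hgmom)
    exact mul_nonneg (by positivity) (add_nonneg hσb (pow_nonneg hC j))
  have hYint : Integrable Y P := by
    refine ((hcentint.add hpint).add (integrable_const (C ^ j))).const_mul (3 ^ j) |>.mono'
      (hYm.mono hm).aestronglyMeasurable ?_
    filter_upwards [hr] with ω hr
    rw [Real.norm_of_nonneg (by positivity)]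
    exact norm_pow_le_three_pow_of_eq_add' (hpbar ω) hr j
  have hY : Y ≤ᵐ[P] b := by rwa [condExp_of_stronglyMeasurable hm hYm hYint] at hgmom
  set W : Ω → ℝ := fun ω => Y ω + C ^ j
  have hWint : Integrable W P := hYint.add (integrable_const _)
  have hWcond : P[W | m] = W :=
    condExp_of_stronglyMeasurable hm (hYm.add stronglyMeasurable_const) hWint
  have hle : (fun ω => ‖p ω‖ ^ j) ≤ᵐ[P] (3 : ℝ) ^ j • (X + W) := by
    filter_upwards [hr] with ω hr
    simpa only [Pi.smul_apply, Pi.add_apply, smul_eq_mul, X, W, Y, add_assoc]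
      using norm_pow_le_three_pow_of_eq_add (p := p ω) (hpbar ω) hr j
  filter_upwards [condExp_mono hpint ((hcentint.add hWint).smul _) hle,
    condExp_smul ((3 : ℝ) ^ j) (X + W) m, condExp_add hcentint hWint m, hcent, hY]
    with ω hmono hsmul hadd hcent hY
  rw [hsmul, Pi.smul_apply, hadd, Pi.add_apply, hWcond, smul_eq_mul] at hmono
  exact hmono.trans (mul_le_mul_of_nonneg_left (by simp only [W]; linarith) (by positivity))

theorem stmt_7_general {Ω : Type} {m0 : MeasurableSpace Ω} {P : Measure Ω}
    [IsProbabilityMeasure P] (𝓕 : Filtration ℕ m0) {n : ℕ}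
    (f : EuclideanSpace ℝ (Fin n) → ℝ)
    (L : ℝ) (hL : ∀ x, ‖iteratedFDeriv ℝ 3 f x‖ ≤ L)
    (w : ℕ → Ω → EuclideanSpace ℝ (Fin n)) (hw : Adapted 𝓕 w)
    (vbar v : ℕ → Ω → EuclideanSpace ℝ (Fin n))
    (hvbar : ∀ k ω, ‖vbar k ω‖ = 1)
    (ε : ℝ) (hvapprox : ∀ k, ∀ᵐ ω ∂P, ‖v k ω - vbar k ω‖ ≤ ε)
    (q : ℕ → Ω → EuclideanSpace ℝ (Fin n) → EuclideanSpace ℝ (Fin n))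
    (hq : ∀ k ω x u, ⟪q k ω x, u⟫ = iteratedFDeriv ℝ 3 f (w k ω) ![u, x, x])
    (μ : ℝ) (μs : ℕ → ℝ) (hμ : ∀ k, μs k ∈ Set.Icc (0 : ℝ) μ)
    (pbar p : ℕ → Ω → EuclideanSpace ℝ (Fin n))
    (hpbar : ∀ k ω, pbar k ω = gradient f (w k ω) + μs k • q k ω (v k ω))
    (σ : ℕ → ℝ)
    (hcentint : ∀ k, ∀ j ∈ ({2, 3, 4} : Finset ℕ),
      Integrable (fun ω => ‖p k ω - pbar k ω‖ ^ j) P)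
    (hcent : ∀ k, ∀ j ∈ ({2, 3, 4} : Finset ℕ),
      P[fun ω => ‖p k ω - pbar k ω‖ ^ j | 𝓕 k] ≤ᵐ[P] fun _ => σ j)
    (A₁ B₁ : ℕ → ℝ)
    (hgradmom : ∀ k, ∀ j ∈ ({2, 3, 4} : Finset ℕ),
      P[fun ω => ‖gradient f (w k ω)‖ ^ j | 𝓕 k] ≤ᵐ[P]
        fun ω => A₁ j + B₁ j * ‖w k ω‖ ^ j) :
    ∃ A B : ℕ → ℝ, (∀ j ∈ ({2, 3, 4} : Finset ℕ), 0 < A j ∧ 0 < B j) ∧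
      ∀ k, ∀ j ∈ ({2, 3, 4} : Finset ℕ),
        P[fun ω => ‖p k ω‖ ^ j | 𝓕 k] ≤ᵐ[P] fun ω => A j + B j * ‖w k ω‖ ^ j := by
  have hL0 : 0 ≤ L := (norm_nonneg _).trans (hL 0)
  have hμ0 : 0 ≤ μ := (hμ 0).1.trans (hμ 0).2
  set C := μ * (L * (1 + ε) ^ 2)
  have hC0 : 0 ≤ C := by positivity
  have hdrift : ∀ k, ∀ᵐ ω ∂P, ‖μs k • q k ω (v k ω)‖ ≤ C := fun k => by
    filter_upwards [hvapprox k] with ω hv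
    exact norm_smul_le_of_inner_eq _ (hq k ω (v k ω)) (hL _) (hvbar k ω) hv (hμ k)
  refine ⟨fun j => 3 ^ j * (|σ j| + |A₁ j| + C ^ j) + 1, fun j => 3 ^ j * |B₁ j| + 1,
    fun j _ => ⟨by positivity, by positivity⟩, fun k j hj => ?_⟩
  have hgrad : StronglyMeasurable[𝓕 k] fun ω => gradient f (w k ω) :=
    ((measurable_gradient f).comp (hw k)).stronglyMeasurable
  filter_upwards [condExp_norm_pow_le_of_eq_add (𝓕.le k) j (hpbar k) (hdrift k) hgrad
    (hcentint k j hj) (hcent k j hj) (hgradmom k j hj)] with ω hω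
  have h3 : (0 : ℝ) < 3 ^ j := by positivity
  have hwj : 0 ≤ ‖w k ω‖ ^ j := by positivity
  refine hω.trans ?_
  nlinarith [mul_le_mul_of_nonneg_left (le_abs_self (σ j)) h3.le,
    mul_le_mul_of_nonneg_left (le_abs_self (A₁ j)) h3.le,
    mul_le_mul_of_nonneg_right (mul_le_mul_of_nonneg_left (le_abs_self (B₁ j)) h3.le) hwj]

/-- The power-iteration update term satisfies the moment bounds required for almost
sure convergence of SGD: with `p̄_k = ∇f(w_k) + μ_k • q_k(v_k)` where
`⟪q_k(v), u⟫ = D³f(w_k)(u, v, v)`, `‖D³f‖ ≤ L`, `‖v_k − v̄_k‖ ≤ ε`, bounded conditional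
central moments of `p_k`, and moment bounds on `∇f(w_k)` and `q_k(v̄_k)`, there exist
positive constants `A_j, B_j` with `E[‖p_k‖ʲ | 𝓕_k] ≤ A_j + B_j ‖w_k‖ʲ`, `j = 2, 3, 4`. -/
theorem stmt_7 {Ω : Type} {m0 : MeasurableSpace Ω} {P : Measure Ω}
    [IsProbabilityMeasure P] (𝓕 : Filtration ℕ m0) {n : ℕ}
    (f : EuclideanSpace ℝ (Fin n) → ℝ) (hf : ContDiff ℝ 3 f)
    (L : ℝ) (hL : ∀ x, ‖iteratedFDeriv ℝ 3 f x‖ ≤ L)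
    (w : ℕ → Ω → EuclideanSpace ℝ (Fin n)) (hw : Adapted 𝓕 w)
    (vbar v : ℕ → Ω → EuclideanSpace ℝ (Fin n))
    (hvbar : ∀ k ω, ‖vbar k ω‖ = 1)
    (ε : ℝ) (hvapprox : ∀ k, ∀ᵐ ω ∂P, ‖v k ω - vbar k ω‖ ≤ ε)
    (q : ℕ → Ω → EuclideanSpace ℝ (Fin n) → EuclideanSpace ℝ (Fin n))
    (hq : ∀ k ω x u, ⟪q k ω x, u⟫ = iteratedFDeriv ℝ 3 f (w k ω) ![u, x, x])
    (μ : ℝ) (μs : ℕ → ℝ) (hμ : ∀ k, μs k ∈ Set.Icc (0 : ℝ) μ)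
    (pbar p : ℕ → Ω → EuclideanSpace ℝ (Fin n))
    (hpbar : ∀ k ω, pbar k ω = gradient f (w k ω) + μs k • q k ω (v k ω))
    (hpint : ∀ k, Integrable (p k) P)
    (hpcond : ∀ k, P[p k | 𝓕 k] =ᵐ[P] pbar k)
    (σ : ℕ → ℝ)
    (hcentint : ∀ k, ∀ j ∈ ({2, 3, 4} : Finset ℕ),
      Integrable (fun ω => ‖p k ω - pbar k ω‖ ^ j) P)
    (hcent : ∀ k, ∀ j ∈ ({2, 3, 4} : Finset ℕ),
      P[fun ω => ‖p k ω - pbar k ω‖ ^ j | 𝓕 k] ≤ᵐ[P] fun _ => σ j)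
    (A₁ B₁ A₂ B₂ : ℕ → ℝ)
    (hgradmom : ∀ k, ∀ j ∈ ({2, 3, 4} : Finset ℕ),
      P[fun ω => ‖gradient f (w k ω)‖ ^ j | 𝓕 k] ≤ᵐ[P]
        fun ω => A₁ j + B₁ j * ‖w k ω‖ ^ j)
    (hqmom : ∀ k, ∀ j ∈ ({2, 3, 4} : Finset ℕ),
      P[fun ω => ‖q k ω (vbar k ω)‖ ^ j | 𝓕 k] ≤ᵐ[P]
        fun ω => A₂ j + B₂ j * ‖w k ω‖ ^ j) :
    ∃ A B : ℕ → ℝ, (∀ j ∈ ({2, 3, 4} : Finset ℕ), 0 < A j ∧ 0 < B j) ∧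
      ∀ k, ∀ j ∈ ({2, 3, 4} : Finset ℕ),
        P[fun ω => ‖p k ω‖ ^ j | 𝓕 k] ≤ᵐ[P] fun ω => A j + B j * ‖w k ω‖ ^ j :=
  stmt_7_general 𝓕 f L hL w hw vbar v hvbar ε hvapprox q hq μ μs hμ pbar p hpbar σ hcentint hcent A₁
    B₁ hgradmom
end

section
/- Let f : EuclideanSpace ℝ (Fin n) → ℝ be three times continuously differentiable with ‖D³f(w)‖ ≤ L for all w. Fix w ∈ EuclideanSpace ℝ (Fin n) and a unit vector v̄, and for a vector v let q(v) denote the unique vector with ⟪q(v), u⟫ = D³f(w)(u, v, v) for all u. Let v be an integrable random vector on a probability space with E[v] = v̄ and ‖v − v̄‖ ≤ ε almost surely. Then ‖E[q(v)] − q(v̄)‖ ≤ L ε². In particular, if v_k are such random vectors with error bounds ε_k → 0, then E[q(v_k)] → q(v̄). -/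
open MeasureTheory Filter
open scoped RealInnerProductSpace

variable {n : ℕ}
local notation "E" => EuclideanSpace ℝ (Fin n)

private lemma upd1 (a b c x : E) : Function.update ![a, b, c] 1 x = ![a, x, c] := by
  funext i; fin_cases i <;> simp [Function.update]

private lemma upd2 (a b c x : E) : Function.update ![a, b, c] 2 x = ![a, b, x] := by
  funext i; fin_cases i <;> simp [Function.update]

private lemma Tadd1 (T : ContinuousMultilinearMap ℝ (fun _ : Fin 3 => E) ℝ) (a b c d : E) : T ![a, b + c, d] = T ![a, b, d] + T ![a, c, d] := by
  have h := T.map_update_add ![a, b, d] 1 b c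
  rw [upd1, upd1, upd1] at h; exact h

private lemma Tadd2 (T : ContinuousMultilinearMap ℝ (fun _ : Fin 3 => E) ℝ) (a b c d : E) : T ![a, b, c + d] = T ![a, b, c] + T ![a, b, d] := by
  have h := T.map_update_add ![a, b, c] 2 c d
  rw [upd2, upd2, upd2] at h; exact h

private lemma key_bound (T : ContinuousMultilinearMap ℝ (fun _ : Fin 3 => E) ℝ) {Ω : Type} {m0 : MeasurableSpace Ω} (P : Measure Ω)
    [IsProbabilityMeasure P]
    (L : ℝ) (hT : ‖T‖ ≤ L)
    (q : E → E) (hq : ∀ x u, ⟪q x, u⟫ = T ![u, x, x])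
    (vbar : E) (v : Ω → E) (ε : ℝ)
    (hvint : Integrable v P) (hvmean : ∫ ω, v ω ∂P = vbar)
    (hvapprox : ∀ᵐ ω ∂P, ‖v ω - vbar‖ ≤ ε)
    (hqvint : Integrable (fun ω => q (v ω)) P) :
    ‖(∫ ω, q (v ω) ∂P) - q vbar‖ ≤ L * ε ^ 2 := by
  have hL0 : 0 ≤ L := le_trans (norm_nonneg T) hT
  have hε0 : 0 ≤ ε := by
    obtain ⟨ω, hω⟩ := hvapprox.exists
    exact le_trans (norm_nonneg _) hω
  set δ : Ω → E := fun ω => v ω - vbar with hδ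
  have hδint : Integrable δ P := hvint.sub (integrable_const _)
  have hδmean : ∫ ω, δ ω ∂P = 0 := by
    rw [integral_sub hvint (integrable_const _), hvmean, integral_const]
    simp
  have key : ∀ u : E,
      ⟪(∫ ω, q (v ω) ∂P) - q vbar, u⟫ = ∫ ω, T ![u, δ ω, δ ω] ∂P := by
    intro u
    set L1 : E →L[ℝ] ℝ := T.toContinuousLinearMap ![u, 0, vbar] 1 with hL1
    set L2 : E →L[ℝ] ℝ := T.toContinuousLinearMap ![u, vbar, 0] 2 with hL2
    have hL1a : ∀ x : E, L1 x = T ![u, x, vbar] := by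
      intro x
      simp [hL1, ContinuousMultilinearMap.toContinuousLinearMap, upd1]
    have hL2a : ∀ x : E, L2 x = T ![u, vbar, x] := by
      intro x
      simp [hL2, ContinuousMultilinearMap.toContinuousLinearMap, upd2]
    have pt : ∀ ω, ⟪q (v ω), u⟫ - ⟪q vbar, u⟫ =
        T ![u, δ ω, δ ω] + L1 (δ ω) + L2 (δ ω) := by
      intro ω
      have hv : v ω = vbar + δ ω := by simp [hδ]
      rw [hq, hq, hL1a, hL2a, hv, Tadd1, Tadd2, Tadd2]
      ring
    have hinner : Integrable (fun ω => ⟪q (v ω), u⟫ - ⟪q vbar, u⟫) P :=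
      (hqvint.inner_const u).sub (integrable_const _)
    have hl1int : Integrable (fun ω => L1 (δ ω)) P := L1.integrable_comp hδint
    have hl2int : Integrable (fun ω => L2 (δ ω)) P := L2.integrable_comp hδint
    have hquadint : Integrable (fun ω => T ![u, δ ω, δ ω]) P := by
      have heq : (fun ω => T ![u, δ ω, δ ω]) =
          fun ω => (⟪q (v ω), u⟫ - ⟪q vbar, u⟫) - L1 (δ ω) - L2 (δ ω) := by
        funext ω; rw [pt ω]; ring
      rw [heq]
      exact (hinner.sub hl1int).sub hl2int
    have lhs : ⟪(∫ ω, q (v ω) ∂P) - q vbar, u⟫ =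
        ∫ ω, (⟪q (v ω), u⟫ - ⟪q vbar, u⟫) ∂P := by
      have h1 : ∫ ω, ⟪q (v ω), u⟫ ∂P = ⟪(∫ ω, q (v ω) ∂P), u⟫ := by
        rw [real_inner_comm, ← integral_inner hqvint]
        exact integral_congr_ae (Filter.Eventually.of_forall fun ω => real_inner_comm _ _)
      rw [integral_sub (hqvint.inner_const u) (integrable_const _), h1, inner_sub_left,
        integral_const]
      simp
    rw [lhs]
    have heq2 : ∫ ω, (⟪q (v ω), u⟫ - ⟪q vbar, u⟫) ∂P =
        ∫ ω, (T ![u, δ ω, δ ω] + L1 (δ ω) + L2 (δ ω)) ∂P := by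
      congr 1; funext ω; exact pt ω
    have i12 : Integrable (fun ω => T ![u, δ ω, δ ω] + L1 (δ ω)) P := hquadint.add hl1int
    rw [heq2, integral_add i12 hl2int, integral_add hquadint hl1int,
      L1.integral_comp_comm hδint, L2.integral_comp_comm hδint, hδmean]
    simp
  have bnd : ∀ u : E, |⟪(∫ ω, q (v ω) ∂P) - q vbar, u⟫| ≤ L * ε ^ 2 * ‖u‖ := by
    intro u
    rw [key u, ← Real.norm_eq_abs]
    have h := norm_integral_le_of_norm_le (μ := P) (f := fun ω => T ![u, δ ω, δ ω])
      (g := fun _ => L * ε ^ 2 * ‖u‖) (integrable_const _) ?_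
    · calc ‖∫ ω, T ![u, δ ω, δ ω] ∂P‖ ≤ ∫ _ω, L * ε ^ 2 * ‖u‖ ∂P := h
        _ = L * ε ^ 2 * ‖u‖ := by simp
    · filter_upwards [hvapprox] with ω hω
      have h1 : ‖T ![u, δ ω, δ ω]‖ ≤ ‖T‖ * (‖u‖ * (‖δ ω‖ * (‖δ ω‖ * 1))) := by
        have := T.le_opNorm ![u, δ ω, δ ω]
        simpa [Fin.prod_univ_three, mul_assoc] using this
      refine h1.trans ?_
      have hδn : ‖δ ω‖ ≤ ε := hω
      have hprod : ‖δ ω‖ * (‖δ ω‖ * 1) ≤ ε * ε := by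
        rw [mul_one]; exact mul_le_mul hδn hδn (norm_nonneg _) hε0
      have h2 : ‖u‖ * (‖δ ω‖ * (‖δ ω‖ * 1)) ≤ ‖u‖ * (ε * ε) :=
        mul_le_mul_of_nonneg_left hprod (norm_nonneg u)
      calc ‖T‖ * (‖u‖ * (‖δ ω‖ * (‖δ ω‖ * 1))) ≤ L * (‖u‖ * (ε * ε)) :=
            mul_le_mul hT h2 (by positivity) hL0
        _ = L * ε ^ 2 * ‖u‖ := by ring
  set x := (∫ ω, q (v ω) ∂P) - q vbar with hx
  rcases eq_or_lt_of_le (norm_nonneg x) with h0 | h0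
  · rw [← h0]; positivity
  · have h' : ‖x‖ * ‖x‖ ≤ (L * ε ^ 2) * ‖x‖ := by
      calc ‖x‖ * ‖x‖ = ‖x‖ ^ 2 := by ring
        _ ≤ |⟪x, x⟫| := by rw [real_inner_self_eq_norm_sq]; exact le_abs_self _
        _ ≤ L * ε ^ 2 * ‖x‖ := bnd x
    exact le_of_mul_le_mul_right h' h0

/-- The regularization gradient computed from an approximate eigenvector is nearly
unbiased: if `⟪q(x), u⟫ = D³f(w)(u, x, x)`, `‖D³f‖ ≤ L`, and `v` is a random vector
with `E[v] = v̄` (a unit vector) and `‖v − v̄‖ ≤ ε` almost surely, then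
`‖E[q(v)] − q(v̄)‖ ≤ L ε²`; in particular, for error bounds `ε_k → 0` the expectations
`E[q(v_k)]` converge to `q(v̄)`. -/
theorem stmt_8 {Ω : Type} {m0 : MeasurableSpace Ω} (P : Measure Ω)
    [IsProbabilityMeasure P] {n : ℕ}
    (f : EuclideanSpace ℝ (Fin n) → ℝ) (hf : ContDiff ℝ 3 f)
    (L : ℝ) (hL : ∀ x, ‖iteratedFDeriv ℝ 3 f x‖ ≤ L)
    (w : EuclideanSpace ℝ (Fin n))
    (q : EuclideanSpace ℝ (Fin n) → EuclideanSpace ℝ (Fin n))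
    (hq : ∀ x u, ⟪q x, u⟫ = iteratedFDeriv ℝ 3 f w ![u, x, x])
    (vbar : EuclideanSpace ℝ (Fin n)) (hvbar : ‖vbar‖ = 1)
    (v : Ω → EuclideanSpace ℝ (Fin n)) (ε : ℝ)
    (hvint : Integrable v P) (hvmean : ∫ ω, v ω ∂P = vbar)
    (hvapprox : ∀ᵐ ω ∂P, ‖v ω - vbar‖ ≤ ε)
    (hqvint : Integrable (fun ω => q (v ω)) P) :
    ‖(∫ ω, q (v ω) ∂P) - q vbar‖ ≤ L * ε ^ 2 ∧
    (∀ (vs : ℕ → Ω → EuclideanSpace ℝ (Fin n)) (εs : ℕ → ℝ),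
      (∀ k, Integrable (vs k) P) → (∀ k, ∫ ω, vs k ω ∂P = vbar) →
      (∀ k, ∀ᵐ ω ∂P, ‖vs k ω - vbar‖ ≤ εs k) →
      (∀ k, Integrable (fun ω => q (vs k ω)) P) →
      Tendsto εs atTop (nhds 0) →
      Tendsto (fun k => ∫ ω, q (vs k ω) ∂P) atTop (nhds (q vbar))) := by
  constructor
  · exact key_bound _ P L (hL w) q hq vbar v ε hvint hvmean hvapprox hqvint
  · intro vs εs hint hmean happrox hqint hεs
    rw [tendsto_iff_norm_sub_tendsto_zero]
    have hb : ∀ k, ‖(∫ ω, q (vs k ω) ∂P) - q vbar‖ ≤ L * εs k ^ 2 := fun k =>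
      key_bound _ P L (hL w) q hq vbar (vs k) (εs k) (hint k) (hmean k) (happrox k) (hqint k)
    have hlim : Tendsto (fun k => L * εs k ^ 2) atTop (nhds 0) := by
      have : Tendsto (fun k => L * εs k ^ 2) atTop (nhds (L * 0 ^ 2)) :=
        (tendsto_const_nhds.mul (hεs.pow 2))
      simpa using this
    exact squeeze_zero (fun k => norm_nonneg _) hb hlim
end

section
/- Let (Ω, 𝓕, P) be a probability space with filtration (𝓕_k). Let (h_k) be an adapted sequence of nonnegative integrable real random variables and (θ_k) an adapted sequence of nonnegative integrable real random variables, let (α_k) be nonnegative deterministic step sizes with ∑_k α_k² < ∞, and suppose there is a constant C ≥ 0 such that for every k, E[h_{k+1} − h_k | 𝓕_k] ≤ −2 α_k θ_k + α_k² C almost surely. Then almost surely the sequence h_k converges to a finite limit, and the series ∑_k α_k θ_k converges almost surely with ∑_k α_k E[θ_k] < ∞. -/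
open MeasureTheory Filter Finset Topology

/-!
Adding to `h_k` the accumulated decrease `∑_{j<k} 2 α_j θ_j` and the remaining perturbation
budget `C ∑_{j≥k} α_j²` gives a nonnegative supermartingale. It is bounded in `L¹` by its initial
expectation, so it converges almost surely; since its three summands are nonnegative and the last
one tends to zero, the partial sums `∑_{j<k} α_j θ_j` stay bounded, hence converge, and then so
does `h_k`. Taking expectations bounds `∑_{j<k} α_j E[θ_j]` by the initial expectation as well.
-/

lemma summable_and_exists_tendsto_of_tendsto_add {x v r : ℕ → ℝ} {c : ℝ}
    (hx : ∀ k, 0 ≤ x k) (hv : ∀ k, 0 ≤ v k) (hr : ∀ k, 0 ≤ r k)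
    (hr_lim : Tendsto r atTop (𝓝 0))
    (hlim : Tendsto (fun k => x k + ∑ j ∈ range k, v j + r k) atTop (𝓝 c)) :
    Summable v ∧ ∃ l, Tendsto x atTop (𝓝 l) := by
  obtain ⟨B, hB⟩ := hlim.bddAbove_range
  have hv_sum : Summable v := summable_of_sum_range_le hv fun k => by
    have := hB ⟨k, rfl⟩
    linarith [hx k, hr k]
  refine ⟨hv_sum, c - ∑' j, v j - 0, ?_⟩
  have hx_eq : x = fun k => (x k + ∑ j ∈ range k, v j + r k) - ∑ j ∈ range k, v j - r k := by
    funext k; ring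
  rw [hx_eq]
  exact (hlim.sub hv_sum.hasSum.tendsto_sum_nat).sub hr_lim

namespace MeasureTheory

variable {Ω : Type*} {m0 : MeasurableSpace Ω} {P : Measure Ω} {𝓕 : Filtration ℕ m0}

theorem Supermartingale.integral_le [IsFiniteMeasure P] {f : ℕ → Ω → ℝ}
    (hf : Supermartingale f 𝓕 P) {i j : ℕ} (hij : i ≤ j) :
    ∫ ω, f j ω ∂P ≤ ∫ ω, f i ω ∂P := by
  simpa only [setIntegral_univ] using hf.setIntegral_le hij MeasurableSet.univ

theorem Supermartingale.exists_ae_tendsto_of_nonneg [IsFiniteMeasure P] {f : ℕ → Ω → ℝ}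
    (hf : Supermartingale f 𝓕 P) (hf_nonneg : ∀ n ω, 0 ≤ f n ω) :
    ∀ᵐ ω ∂P, ∃ c, Tendsto (fun n => f n ω) atTop (𝓝 c) := by
  have hbdd : ∀ n, eLpNorm ((-f) n) 1 P ≤ (∫ ω, f 0 ω ∂P).toNNReal := fun n => by
    rw [Pi.neg_apply, eLpNorm_neg, eLpNorm_one_eq_lintegral_enorm,
      ← ofReal_integral_norm_eq_lintegral_enorm (hf.integrable n)]
    simp only [Real.norm_of_nonneg (hf_nonneg n _)]
    exact ENNReal.ofReal_le_ofReal (hf.integral_le (Nat.zero_le n))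
  filter_upwards [hf.neg.exists_ae_tendsto_of_bdd hbdd] with ω ⟨c, hc⟩
  exact ⟨-c, by simpa using hc.neg⟩

end MeasureTheory

section QuasiMartingale

variable {Ω : Type*} {m0 : MeasurableSpace Ω} {P : Measure Ω} {𝓕 : Filtration ℕ m0}
  {h v : ℕ → Ω → ℝ} {b : ℕ → ℝ}

noncomputable def compensatedProcess (h v : ℕ → Ω → ℝ) (b : ℕ → ℝ) (k : ℕ) (ω : Ω) : ℝ :=
  h k ω + ∑ j ∈ range k, v j ω + (∑' j, b j - ∑ j ∈ range k, b j)

lemma compensatedProcess_succ (k : ℕ) :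
    compensatedProcess h v b (k + 1) =
      fun ω => (h (k + 1) ω - h k ω) + (compensatedProcess h v b k ω + v k ω - b k) := by
  funext ω
  simp only [compensatedProcess, sum_range_succ]
  ring

lemma tsum_sub_sum_range_nonneg (hb_nonneg : ∀ k, 0 ≤ b k) (hb : Summable b) (k : ℕ) :
    0 ≤ ∑' j, b j - ∑ j ∈ range k, b j :=
  sub_nonneg.2 (hb.sum_le_tsum _ fun j _ => hb_nonneg j)

lemma sum_range_le_compensatedProcess (hh_nonneg : ∀ k ω, 0 ≤ h k ω)
    (hb_nonneg : ∀ k, 0 ≤ b k) (hb : Summable b) (k : ℕ) (ω : Ω) :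
    ∑ j ∈ range k, v j ω ≤ compensatedProcess h v b k ω := by
  have := tsum_sub_sum_range_nonneg hb_nonneg hb k
  have := hh_nonneg k ω
  unfold compensatedProcess
  linarith

lemma compensatedProcess_nonneg (hh_nonneg : ∀ k ω, 0 ≤ h k ω) (hv_nonneg : ∀ k ω, 0 ≤ v k ω)
    (hb_nonneg : ∀ k, 0 ≤ b k) (hb : Summable b) (k : ℕ) (ω : Ω) :
    0 ≤ compensatedProcess h v b k ω :=
  (sum_nonneg fun j _ => hv_nonneg j ω).trans
    (sum_range_le_compensatedProcess hh_nonneg hb_nonneg hb k ω)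

lemma adapted_compensatedProcess (hh : Adapted 𝓕 h) (hv : Adapted 𝓕 v) :
    Adapted 𝓕 (compensatedProcess h v b) := fun k =>
  ((hh k).add (Finset.measurable_fun_sum _ fun _ hj =>
    hv.measurable_le (mem_range.1 hj).le)).add_const _

lemma integrable_compensatedProcess [IsFiniteMeasure P] (hh : ∀ k, Integrable (h k) P)
    (hv : ∀ k, Integrable (v k) P) (k : ℕ) :
    Integrable (compensatedProcess h v b k) P :=
  ((hh k).add (integrable_finsetSum _ fun j _ => hv j)).add (integrable_const _)

lemma supermartingale_compensatedProcess [IsFiniteMeasure P]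
    (hh_ad : Adapted 𝓕 h) (hv_ad : Adapted 𝓕 v)
    (hh_int : ∀ k, Integrable (h k) P) (hv_int : ∀ k, Integrable (v k) P)
    (hcond : ∀ k, P[fun ω => h (k + 1) ω - h k ω | 𝓕 k] ≤ᵐ[P] fun ω => -v k ω + b k) :
    Supermartingale (compensatedProcess h v b) 𝓕 P := by
  have hY_ad := (adapted_compensatedProcess (b := b) hh_ad hv_ad).stronglyAdapted
  have hY_int := integrable_compensatedProcess (b := b) hh_int hv_int
  refine supermartingale_nat hY_ad hY_int fun k => ?_
  set g : Ω → ℝ := fun ω => compensatedProcess h v b k ω + v k ω - b k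
  have hg_int : Integrable g P := ((hY_int k).add (hv_int k)).sub (integrable_const _)
  have hg : P[g | 𝓕 k] = g := condExp_of_stronglyMeasurable (𝓕.le k)
    (((hY_ad k).add (hv_ad k).stronglyMeasurable).sub stronglyMeasurable_const) hg_int
  have hsucc : compensatedProcess h v b (k + 1) = fun ω => (h (k + 1) ω - h k ω) + g ω :=
    compensatedProcess_succ k
  have hadd : P[fun ω => (h (k + 1) ω - h k ω) + g ω | 𝓕 k] =ᵐ[P]
      fun ω => P[fun ω => h (k + 1) ω - h k ω | 𝓕 k] ω + P[g | 𝓕 k] ω :=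
    condExp_add ((hh_int (k + 1)).sub (hh_int k)) hg_int (𝓕 k)
  rw [hsucc]
  filter_upwards [hadd, hcond k] with ω hadd hle
  rw [hadd, hg]
  simp only [g]
  linarith

theorem ae_tendsto_and_summable_of_condExp_sub_le [IsFiniteMeasure P]
    (hh_ad : Adapted 𝓕 h) (hv_ad : Adapted 𝓕 v)
    (hh_nonneg : ∀ k ω, 0 ≤ h k ω) (hv_nonneg : ∀ k ω, 0 ≤ v k ω)
    (hh_int : ∀ k, Integrable (h k) P) (hv_int : ∀ k, Integrable (v k) P)
    (hb_nonneg : ∀ k, 0 ≤ b k) (hb : Summable b)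
    (hcond : ∀ k, P[fun ω => h (k + 1) ω - h k ω | 𝓕 k] ≤ᵐ[P] fun ω => -v k ω + b k) :
    (∀ᵐ ω ∂P, Summable (fun k => v k ω) ∧ ∃ l, Tendsto (fun k => h k ω) atTop (𝓝 l)) ∧
      Summable fun k => ∫ ω, v k ω ∂P := by
  have hY := supermartingale_compensatedProcess hh_ad hv_ad hh_int hv_int hcond
  have hY_nonneg := compensatedProcess_nonneg hh_nonneg hv_nonneg hb_nonneg hb
  have htail : Tendsto (fun k => ∑' j, b j - ∑ j ∈ range k, b j) atTop (𝓝 0) := by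
    simpa only [sub_self] using (tendsto_const_nhds (x := ∑' j, b j)).sub
      hb.hasSum.tendsto_sum_nat
  refine ⟨?_, ?_⟩
  · filter_upwards [hY.exists_ae_tendsto_of_nonneg hY_nonneg] with ω ⟨c, hc⟩
    exact summable_and_exists_tendsto_of_tendsto_add (hh_nonneg · ω) (hv_nonneg · ω)
      (tsum_sub_sum_range_nonneg hb_nonneg hb) htail hc
  refine summable_of_sum_range_le (fun k => integral_nonneg (hv_nonneg k))
    (c := ∫ ω, compensatedProcess h v b 0 ω ∂P) fun n => ?_
  calc ∑ j ∈ range n, ∫ ω, v j ω ∂P = ∫ ω, ∑ j ∈ range n, v j ω ∂P :=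
        (integral_finsetSum _ fun j _ => hv_int j).symm
    _ ≤ ∫ ω, compensatedProcess h v b n ω ∂P :=
        integral_mono (integrable_finsetSum _ fun j _ => hv_int j)
          (integrable_compensatedProcess hh_int hv_int n)
          (sum_range_le_compensatedProcess hh_nonneg hb_nonneg hb n)
    _ ≤ ∫ ω, compensatedProcess h v b 0 ω ∂P := hY.integral_le (Nat.zero_le n)

end QuasiMartingale

/-- Quasi-martingale step of the SGD convergence proof: a nonnegative adapted
integrable process `h_k` with `E[h_{k+1} − h_k | 𝓕_k] ≤ −2 α_k θ_k + α_k² C`,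
`θ_k ≥ 0` adapted and `∑ α_k² < ∞`, converges almost surely, and the series
`∑ α_k θ_k` converges almost surely with `∑ α_k E[θ_k] < ∞`. -/
theorem stmt_10 {Ω : Type} {m0 : MeasurableSpace Ω} {P : Measure Ω}
    [IsProbabilityMeasure P] (𝓕 : Filtration ℕ m0)
    (h θ : ℕ → Ω → ℝ)
    (hhad : Adapted 𝓕 h) (hθad : Adapted 𝓕 θ)
    (hhnn : ∀ k ω, 0 ≤ h k ω) (hθnn : ∀ k ω, 0 ≤ θ k ω)
    (hhint : ∀ k, Integrable (h k) P) (hθint : ∀ k, Integrable (θ k) P)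
    (α : ℕ → ℝ) (hα : ∀ k, 0 ≤ α k) (hα2 : Summable fun k => α k ^ 2)
    (C : ℝ) (hC : 0 ≤ C)
    (hcond : ∀ k, P[fun ω => h (k + 1) ω - h k ω | 𝓕 k] ≤ᵐ[P]
      fun ω => -2 * α k * θ k ω + α k ^ 2 * C) :
    (∀ᵐ ω ∂P, ∃ l, Tendsto (fun k => h k ω) atTop (nhds l)) ∧
    (∀ᵐ ω ∂P, Summable fun k => α k * θ k ω) ∧
    Summable (fun k => α k * ∫ ω, θ k ω ∂P) := by
  obtain ⟨hae, hint⟩ := ae_tendsto_and_summable_of_condExp_sub_le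
    (v := fun k ω => 2 * (α k * θ k ω)) (b := fun k => α k ^ 2 * C) hhad
    (fun k => ((hθad k).const_mul _).const_mul 2) hhnn
    (fun k ω => mul_nonneg zero_le_two (mul_nonneg (hα k) (hθnn k ω))) hhint
    (fun k => ((hθint k).const_mul _).const_mul 2)
    (fun k => mul_nonneg (sq_nonneg _) hC) (hα2.mul_right C)
    (fun k => (hcond k).trans (.of_forall fun ω => (by ring : _ = _).le))
  simp only [integral_const_mul] at hint
  refine ⟨hae.mono fun ω hω => hω.2, hae.mono fun ω hω => ?_, ?_⟩
  · exact (summable_mul_left_iff two_ne_zero).1 hω.1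
  · exact (summable_mul_left_iff two_ne_zero).1 hint
end

section
/- Let (Ω, 𝓕, P) be a probability space with filtration (𝓕_k). Let (θ_k) be an adapted sequence of nonnegative integrable real random variables and (α_k) nonnegative deterministic step sizes with ∑_k α_k = ∞ and ∑_k α_k² < ∞. Suppose there are constants K₄, K₅ ≥ 0 such that E[θ_{k+1} − θ_k | 𝓕_k] ≤ α_k θ_k K₄ + α_k² K₅ almost surely for every k, and suppose additionally that ∑_k α_k E[θ_k] < ∞ and that ∑_k α_k θ_k < ∞ almost surely. Then θ_k → 0 almost surely. -/
/-!
With `A k = ∑_{j<k} b j` the accumulated drift bounds, `X k - A k` is a supermartingale. Since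
`X ≥ 0`, its negative part is dominated by `A k`, whose expectation is bounded, so it is bounded
in `L¹` and converges almost surely; `A k` converges wherever `∑ b k` is finite, hence so does
`X k`. For `θ`, a limit `L ≠ 0` would make `α k = (α k θ k) / θ k` summable, contradicting
`∑ α k = ∞`.
-/

open MeasureTheory Filter Finset

theorem eq_zero_of_tendsto_of_summable_mul {α x : ℕ → ℝ} {L : ℝ} (hα : ¬ Summable α)
    (hx : Tendsto x atTop (nhds L)) (hαx : Summable fun k => α k * x k) : L = 0 := by
  by_contra hL
  have hx_inv : Tendsto (fun k => (x k)⁻¹) cofinite (nhds L⁻¹) := by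
    rw [Nat.cofinite_eq_atTop]
    exact hx.inv₀ hL
  have hnorm : Summable fun k => ‖α k * x k‖ := by
    simpa only [Real.norm_eq_abs] using hαx.abs
  have hα_eq : (fun k => α k * x k * (x k)⁻¹) =ᶠ[cofinite] α := by
    rw [Nat.cofinite_eq_atTop]
    filter_upwards [hx.eventually_ne hL] with k hk
    field_simp
  exact hα ((hnorm.mul_tendsto_const hx_inv).congr_cofinite hα_eq)

section QuasiMartingale

variable {Ω : Type*} {m0 : MeasurableSpace Ω} {P : Measure Ω} [IsFiniteMeasure P]
  {𝓕 : Filtration ℕ m0} {X b : ℕ → Ω → ℝ}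

theorem supermartingale_sub_sum_range (hX : Adapted 𝓕 X) (hXi : ∀ k, Integrable (X k) P)
    (hb : Adapted 𝓕 b) (hbi : ∀ k, Integrable (b k) P)
    (hcond : ∀ k, P[X (k + 1) - X k | 𝓕 k] ≤ᵐ[P] b k) :
    Supermartingale (fun k ω => X k ω - ∑ j ∈ range k, b j ω) 𝓕 P := by
  refine supermartingale_of_condExp_sub_nonneg_nat (fun k => ?_) (fun k => ?_) fun k => ?_
  · refine ((hX k).sub (Finset.measurable_sum _ fun j hj => ?_)).stronglyMeasurable
    exact (hb j).mono (𝓕.mono (mem_range.mp hj).le) le_rfl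
  · exact (hXi k).sub (integrable_finsetSum _ fun j _ => hbi j)
  · have hdiff : (fun ω => X k ω - ∑ j ∈ range k, b j ω)
        - (fun ω => X (k + 1) ω - ∑ j ∈ range (k + 1), b j ω) = b k - (X (k + 1) - X k) := by
      funext ω
      simp only [Pi.sub_apply, sum_range_succ]
      ring
    have hb_cond : P[b k | 𝓕 k] = b k :=
      condExp_of_stronglyMeasurable (𝓕.le k) (hb k).stronglyMeasurable (hbi k)
    rw [hdiff]
    filter_upwards [condExp_sub (m := 𝓕 k) (hbi k) ((hXi (k + 1)).sub (hXi k)), hcond k]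
      with ω h_sub h_le
    rw [h_sub, Pi.sub_apply, hb_cond, Pi.zero_apply, sub_nonneg]
    exact h_le

theorem eLpNorm_one_sub_sum_range_le
    (hsuper : Supermartingale (fun k ω => X k ω - ∑ j ∈ range k, b j ω) 𝓕 P)
    (hXnn : ∀ k ω, 0 ≤ X k ω) (hbnn : ∀ k ω, 0 ≤ b k ω) (hbi : ∀ k, Integrable (b k) P)
    (hsum : Summable fun k => ∫ ω, b k ω ∂P) (k : ℕ) :
    eLpNorm (fun ω => X k ω - ∑ j ∈ range k, b j ω) 1 P
      ≤ ENNReal.ofReal (∫ ω, X 0 ω ∂P + 2 * ∑' j, ∫ ω, b j ω ∂P) := by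
  set Z := fun k ω => X k ω - ∑ j ∈ range k, b j ω
  have hZi := hsuper.integrable k
  have hAi : Integrable (fun ω => ∑ j ∈ range k, b j ω) P :=
    integrable_finsetSum _ fun j _ => hbi j
  have h_abs (ω : Ω) : |Z k ω| ≤ Z k ω + 2 * ∑ j ∈ range k, b j ω := by
    have := hXnn k ω
    have := sum_nonneg fun j (_ : j ∈ range k) => hbnn j ω
    rw [abs_le']
    constructor <;> simp only [Z] <;> linarith
  have h_mean : ∫ ω, Z k ω ∂P ≤ ∫ ω, X 0 ω ∂P := by
    simpa [Z] using hsuper.setIntegral_le (Nat.zero_le k) MeasurableSet.univ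
  have h_comp : ∫ ω, ∑ j ∈ range k, b j ω ∂P ≤ ∑' j, ∫ ω, b j ω ∂P := by
    rw [integral_finsetSum _ fun j _ => hbi j]
    exact hsum.sum_le_tsum _ fun j _ => integral_nonneg (hbnn j)
  rw [eLpNorm_one_eq_lintegral_enorm, ← ofReal_integral_norm_eq_lintegral_enorm hZi]
  refine ENNReal.ofReal_le_ofReal ?_
  calc ∫ ω, ‖Z k ω‖ ∂P ≤ ∫ ω, (Z k ω + 2 * ∑ j ∈ range k, b j ω) ∂P :=
        integral_mono hZi.norm (hZi.add (hAi.const_mul 2)) h_abs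
    _ = ∫ ω, Z k ω ∂P + 2 * ∫ ω, ∑ j ∈ range k, b j ω ∂P := by
        rw [integral_add hZi (hAi.const_mul 2), integral_const_mul]
    _ ≤ ∫ ω, X 0 ω ∂P + 2 * ∑' j, ∫ ω, b j ω ∂P := by linarith

theorem ae_exists_tendsto_of_condExp_sub_le (hX : Adapted 𝓕 X) (hXi : ∀ k, Integrable (X k) P)
    (hXnn : ∀ k ω, 0 ≤ X k ω) (hb : Adapted 𝓕 b) (hbi : ∀ k, Integrable (b k) P)
    (hbnn : ∀ k ω, 0 ≤ b k ω) (hcond : ∀ k, P[X (k + 1) - X k | 𝓕 k] ≤ᵐ[P] b k)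
    (hsum : Summable fun k => ∫ ω, b k ω ∂P) (hsum_ae : ∀ᵐ ω ∂P, Summable fun k => b k ω) :
    ∀ᵐ ω ∂P, ∃ c, Tendsto (fun k => X k ω) atTop (nhds c) := by
  have hsuper := supermartingale_sub_sum_range hX hXi hb hbi hcond
  have hbdd (k : ℕ) : eLpNorm ((-fun k ω => X k ω - ∑ j ∈ range k, b j ω) k) 1 P
      ≤ (ENNReal.ofReal (∫ ω, X 0 ω ∂P + 2 * ∑' j, ∫ ω, b j ω ∂P)).toNNReal := by
    simpa [eLpNorm_neg] using eLpNorm_one_sub_sum_range_le hsuper hXnn hbnn hbi hsum k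
  filter_upwards [hsuper.neg.exists_ae_tendsto_of_bdd hbdd, hsum_ae] with ω ⟨z, hz⟩ hbω
  refine ⟨-z + ∑' j, b j ω, ?_⟩
  simpa using hz.neg.add hbω.hasSum.tendsto_sum_nat

end QuasiMartingale

/-- Second quasi-martingale step of the SGD convergence proof: a nonnegative adapted
integrable process `θ_k` with `E[θ_{k+1} − θ_k | 𝓕_k] ≤ α_k θ_k K₄ + α_k² K₅`, where
`∑ α_k = ∞`, `∑ α_k² < ∞`, `∑ α_k E[θ_k] < ∞` and `∑ α_k θ_k < ∞` almost surely,
converges to `0` almost surely. -/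
theorem stmt_11 {Ω : Type} {m0 : MeasurableSpace Ω} {P : Measure Ω}
    [IsProbabilityMeasure P] (𝓕 : Filtration ℕ m0)
    (θ : ℕ → Ω → ℝ) (hθad : Adapted 𝓕 θ)
    (hθnn : ∀ k ω, 0 ≤ θ k ω) (hθint : ∀ k, Integrable (θ k) P)
    (α : ℕ → ℝ) (hα : ∀ k, 0 ≤ α k)
    (hα1 : Tendsto (fun N => ∑ k ∈ Finset.range N, α k) atTop atTop)
    (hα2 : Summable fun k => α k ^ 2)
    (K₄ K₅ : ℝ) (hK₄ : 0 ≤ K₄) (hK₅ : 0 ≤ K₅)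
    (hcond : ∀ k, P[fun ω => θ (k + 1) ω - θ k ω | 𝓕 k] ≤ᵐ[P]
      fun ω => α k * θ k ω * K₄ + α k ^ 2 * K₅)
    (hsumexp : Summable fun k => α k * ∫ ω, θ k ω ∂P)
    (hsumas : ∀ᵐ ω ∂P, Summable fun k => α k * θ k ω) :
    ∀ᵐ ω ∂P, Tendsto (fun k => θ k ω) atTop (nhds 0) := by
  set b : ℕ → Ω → ℝ := fun k ω => α k * θ k ω * K₄ + α k ^ 2 * K₅
  have hb : Adapted 𝓕 b := fun k => (((hθad k).const_mul (α k)).mul_const K₄).add_const _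
  have hbi (k : ℕ) : Integrable (b k) P :=
    (((hθint k).const_mul (α k)).mul_const K₄).add (integrable_const _)
  have hbnn (k : ℕ) (ω : Ω) : 0 ≤ b k ω := by
    have := hθnn k ω
    have := hα k
    positivity
  have hsum : Summable fun k => ∫ ω, b k ω ∂P := by
    refine ((hsumexp.mul_right K₄).add (hα2.mul_right K₅)).congr fun k => ?_
    rw [integral_add (((hθint k).const_mul (α k)).mul_const K₄) (integrable_const _),
      integral_mul_const, integral_const_mul]
    simp
  have hsum_ae : ∀ᵐ ω ∂P, Summable fun k => b k ω := by
    filter_upwards [hsumas] with ω hω using (hω.mul_right K₄).add (hα2.mul_right K₅)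
  have hα_not_summable : ¬ Summable α :=
    (not_summable_iff_tendsto_nat_atTop_of_nonneg hα).mpr hα1
  filter_upwards [ae_exists_tendsto_of_condExp_sub_le hθad hθint hθnn hb hbi hbnn hcond hsum
    hsum_ae, hsumas] with ω ⟨L, hL⟩ hω
  rwa [eq_zero_of_tendsto_of_summable_mul hα_not_summable hL hω] at hL
end
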